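/- Let n ≥ 1 and S = {s_1 < ... < s_r} ⊆ [n-1], with s_0 = 0, s_{r+1} = n. The number of Cayley permutations w of [n] with strict ascent set Asc°(w) = {i : w(i) < w(i+1)} contained in S equals Σ_{k=0}^{n} Σ_{i=0}^{k} (-1)^i C(k,i) Π_{j=0}^{r} ⟨(k-i) over (s_{j+1} - s_j)⟩, where ⟨m over a⟩ = C(m + a - 1, a). -/

import Mathlib

open Finset

def IsCayley {n : ℕ} (w : Fin n → ℕ) : Prop :=
  ∃ k ≤ n, Set.range w = Set.Icc 1 k

def ascSetS {n : ℕ} (w : Fin n → ℕ) : Finset ℕ :=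
  (Finset.univ.filter (fun i : Fin (n - 1) =>
    w ⟨i.val, by have := i.isLt; omega⟩ < w ⟨i.val + 1, by have := i.isLt; omega⟩)).image
    (fun i => i.val + 1)

/-!
Let `F k` count the words `Fin n → [1, k]` whose strict ascents all lie in `S`, and `G k` those
among them that are onto `[1, k]`. Cutting a word at `s 1 < ⋯ < s r`, the condition on ascents
says exactly that every block is weakly decreasing, so `F k = ∏ j, ⟨k over s (j+1) - s j⟩`.
Standardizing the image of a word (an order-preserving relabelling, which keeps the ascent set)
gives `F k = ∑ m, C(k, m) G m`, and binomial inversion turns this into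
`G k = ∑ i, (-1)^i C(k, i) F (k - i)`. Cayley permutations are the disjoint union over `k ≤ n`
of the words onto `[1, k]`.
-/

theorem Finset.exists_strictMonoOn_image_eq {α β : Type*} [LinearOrder α] [LinearOrder β]
    [Nonempty β] {U : Finset α} {V : Finset β} (h : #U = #V) :
    ∃ f : α → β, StrictMonoOn f U ∧ U.image f = V := by
  classical
  let φ : U ≃o V := (U.orderIsoOfFin h).symm.trans (V.orderIsoOfFin rfl)
  refine ⟨fun x => if hx : x ∈ U then φ ⟨x, hx⟩ else Classical.arbitrary β, ?_, ?_⟩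
  · intro x hx y hy hxy
    rw [mem_coe] at hx hy
    simp only [dif_pos hx, dif_pos hy]
    exact φ.strictMono (show (⟨x, hx⟩ : U) < ⟨y, hy⟩ from hxy)
  · ext y
    simp only [mem_image]
    constructor
    · rintro ⟨x, hx, rfl⟩
      simp [hx]
    · intro hy
      obtain ⟨⟨x, hx⟩, hxy⟩ := φ.surjective ⟨y, hy⟩
      exact ⟨x, hx, by simp [hx, hxy]⟩

lemma Fin.antitone_cons {α : Type*} [Preorder α] {a : ℕ} {x : α} {u : Fin a → α}
    (hu : Antitone u) (hx : ∀ i, u i ≤ x) :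
    Antitone (Fin.cons x u : Fin (a + 1) → α) := by
  intro i j hij
  induction j using Fin.cases with
  | zero => simp [Fin.le_zero_iff.1 hij]
  | succ j =>
    induction i using Fin.cases with
    | zero => exact hx j
    | succ i => exact hu (Fin.succ_le_succ_iff.1 hij)

lemma Fin.antitone_of_succ_le {α : Type*} [Preorder α] {m : ℕ} {f : Fin m → α}
    (h : ∀ i (hi : i + 1 < m), f ⟨i + 1, hi⟩ ≤ f ⟨i, by omega⟩) : Antitone f := by
  cases m with
  | zero => exact fun i => i.elim0
  | succ m => exact Fin.antitone_iff_succ_le.2 fun i => h i i.succ.isLt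

lemma Nat.choose_mul_choose_sub_comm (k i m : ℕ) :
    k.choose i * (k - i).choose m = k.choose m * (k - m).choose i := by
  by_cases h : i + m ≤ k
  · have := Nat.choose_mul (n := k) (k := k - i) (s := m) (by omega)
    rwa [Nat.choose_symm (by omega), show k - i - m = k - m - i by omega,
      Nat.choose_symm (by omega)] at this
  · rcases le_or_gt i k with hi | hi
    · rw [Nat.choose_eq_zero_of_lt (show k - i < m by omega), mul_zero]
      rcases le_or_gt m k with hm | hm
      · rw [Nat.choose_eq_zero_of_lt (show k - m < i by omega), mul_zero]
      · rw [Nat.choose_eq_zero_of_lt hm, zero_mul]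
    · rw [Nat.choose_eq_zero_of_lt hi, Nat.choose_eq_zero_of_lt (show k - m < i by omega)]
      simp

lemma Finset.sum_range_choose_mul_of_le {R : Type*} [CommSemiring R] {a N : ℕ} (h : a ≤ N)
    (φ : ℕ → R) :
    ∑ i ∈ range (N + 1), (a.choose i : R) * φ i =
      ∑ i ∈ range (a + 1), (a.choose i : R) * φ i := by
  refine (sum_subset (range_subset_range.2 (by omega)) fun i _ hi => ?_).symm
  rw [Nat.choose_eq_zero_of_lt (by simpa using hi), Nat.cast_zero, zero_mul]

theorem binomial_inversion {R : Type*} [CommRing R] {f g : ℕ → R}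
    (hfg : ∀ k, f k = ∑ m ∈ range (k + 1), (k.choose m : R) * g m) (k : ℕ) :
    ∑ i ∈ range (k + 1), (-1) ^ i * (k.choose i : R) * f (k - i) = g k := by
  have alternating (m : ℕ) : ∑ i ∈ range (m + 1), (m.choose i : R) * (-1) ^ i =
      if m = 0 then 1 else 0 := by
    have := congrArg (Int.cast : ℤ → R) (Int.alternating_sum_range_choose (n := m))
    push_cast at this
    simpa [mul_comm] using this
  calc ∑ i ∈ range (k + 1), (-1) ^ i * (k.choose i : R) * f (k - i)
      = ∑ i ∈ range (k + 1), ∑ m ∈ range (k + 1),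
          (-1) ^ i * ((k.choose i * (k - i).choose m : ℕ) : R) * g m := by
        refine sum_congr rfl fun i _ => ?_
        rw [hfg, ← sum_range_choose_mul_of_le (a := k - i) (N := k) (by omega), mul_sum]
        refine sum_congr rfl fun m _ => ?_
        push_cast; ring
    _ = ∑ m ∈ range (k + 1), (k.choose m : R) *
          (∑ i ∈ range (k - m + 1), ((k - m).choose i : R) * (-1) ^ i) * g m := by
        rw [sum_comm]
        refine sum_congr rfl fun m hm => ?_
        rw [← sum_range_choose_mul_of_le (N := k) (by omega), mul_sum, sum_mul]
        refine sum_congr rfl fun i _ => ?_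
        rw [Nat.choose_mul_choose_sub_comm]
        push_cast; ring
    _ = g k := by
        rw [sum_eq_single k (fun m hm hmk => by
          rw [alternating, if_neg (by simp at hm; omega), mul_zero, zero_mul])
          (by simp)]
        simp

open Classical in
def antitoneWords (a k : ℕ) : Finset (Fin a → ℕ) :=
  {v ∈ Fintype.piFinset fun _ => Icc 1 k | Antitone v}

lemma mem_antitoneWords {a k : ℕ} {v : Fin a → ℕ} :
    v ∈ antitoneWords a k ↔ (∀ i, v i ∈ Icc 1 k) ∧ Antitone v := by
  simp [antitoneWords]

lemma antitoneWords_filter_head_le (a k : ℕ) :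
    {v ∈ antitoneWords (a + 1) (k + 1) | v 0 ≤ k} = antitoneWords (a + 1) k := by
  ext v
  simp only [mem_filter, mem_antitoneWords, mem_Icc]
  constructor
  · rintro ⟨⟨hv, hanti⟩, h0⟩
    exact ⟨fun i => ⟨(hv i).1, (hanti (Fin.zero_le i)).trans h0⟩, hanti⟩
  · rintro ⟨hv, hanti⟩
    exact ⟨⟨fun i => ⟨(hv i).1, (hv i).2.trans k.le_succ⟩, hanti⟩, (hv 0).2⟩

lemma card_antitoneWords_filter_not_head_le (a k : ℕ) :
    #{v ∈ antitoneWords (a + 1) (k + 1) | ¬ v 0 ≤ k} = #(antitoneWords a (k + 1)) := by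
  refine card_nbij' Fin.tail (fun u : Fin a → ℕ => (Fin.cons (k + 1) u : Fin (a + 1) → ℕ))
    ?_ ?_ ?_ ?_
  · intro v hv
    simp only [coe_filter, Set.mem_ofPred_eq, mem_coe, mem_antitoneWords] at hv ⊢
    exact ⟨fun i => hv.1.1 i.succ, hv.1.2.comp_monotone (Fin.strictMono_succ.monotone)⟩
  · intro u hu
    simp only [mem_coe, mem_antitoneWords, mem_Icc] at hu
    simp only [coe_filter, Set.mem_ofPred_eq, mem_antitoneWords, mem_Icc, Fin.cons_zero]
    refine ⟨⟨fun i => ?_, Fin.antitone_cons hu.2 fun i => (hu.1 i).2⟩, by omega⟩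
    induction i using Fin.cases with
    | zero => simp
    | succ i => simpa using hu.1 i
  · intro v hv
    simp only [coe_filter, Set.mem_ofPred_eq, mem_antitoneWords, mem_Icc] at hv
    have : v 0 = k + 1 := by have := hv.1.1 0; omega
    exact this ▸ Fin.cons_self_tail v
  · intro u _
    exact Fin.tail_cons _ _

theorem card_antitoneWords (a k : ℕ) : #(antitoneWords a k) = k.multichoose a := by
  induction a generalizing k with
  | zero => simp [antitoneWords, Subsingleton.antitone, Nat.multichoose_zero_right]
  | succ a iha =>
    induction k with
    | zero =>
      simp only [Nat.multichoose_zero_succ, card_eq_zero, eq_empty_iff_forall_notMem,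
        mem_antitoneWords]
      intro v hv
      simpa using hv.1 0
    | succ k ihk =>
      rw [Nat.multichoose_succ_succ, ← card_filter_add_card_filter_not (fun v => v 0 ≤ k),
        antitoneWords_filter_head_le, card_antitoneWords_filter_not_head_le, ihk, iha]

lemma ascSetS_subset_iff {n : ℕ} (w : Fin n → ℕ) (S : Finset ℕ) :
    ascSetS w ⊆ S ↔
      ∀ (p : ℕ) (h : p + 1 < n), w ⟨p, by omega⟩ < w ⟨p + 1, h⟩ → p + 1 ∈ S := by
  simp only [ascSetS, image_subset_iff, mem_filter, mem_univ, true_and]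
  exact ⟨fun H p h => H ⟨p, by omega⟩, fun H i => H i (by omega)⟩

lemma ascSetS_comp_of_strictMonoOn {n : ℕ} {w : Fin n → ℕ} {f : ℕ → ℕ} {U : Set ℕ}
    (hf : StrictMonoOn f U) (hw : ∀ i, w i ∈ U) : ascSetS (f ∘ w) = ascSetS w := by
  unfold ascSetS
  congr 1
  exact filter_congr fun i _ => hf.lt_iff_lt (hw _) (hw _)

section Words

variable (n : ℕ) (S : Finset ℕ)

def ascWords (T : Finset ℕ) : Finset (Fin n → ℕ) :=
  {w ∈ Fintype.piFinset fun _ => T | ascSetS w ⊆ S}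

def ascWordsOnto (T : Finset ℕ) : Finset (Fin n → ℕ) :=
  {w ∈ Fintype.piFinset fun _ => T | univ.image w = T ∧ ascSetS w ⊆ S}

variable {n S}

lemma mem_ascWordsOnto {T : Finset ℕ} {w : Fin n → ℕ} :
    w ∈ ascWordsOnto n S T ↔ univ.image w = T ∧ ascSetS w ⊆ S := by
  simp only [ascWordsOnto, mem_filter, Fintype.mem_piFinset, and_iff_right_iff_imp]
  rintro ⟨rfl, -⟩ i
  exact mem_image_of_mem w (mem_univ i)

lemma card_ascWords_eq_sum_powerset (T : Finset ℕ) :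
    #(ascWords n S T) = ∑ U ∈ T.powerset, #(ascWordsOnto n S U) := by
  rw [ascWords, card_eq_sum_card_fiberwise (f := fun w => univ.image w) fun w hw =>
    mem_powerset.2 (image_subset_iff.2 fun i _ => Fintype.mem_piFinset.1 (mem_filter.1 hw).1 i)]
  refine sum_congr rfl fun U hU => congrArg card ?_
  ext w
  rw [mem_filter, mem_ascWordsOnto, mem_filter, Fintype.mem_piFinset]
  constructor
  · rintro ⟨⟨-, hasc⟩, himg⟩
    exact ⟨himg, hasc⟩
  · rintro ⟨himg, hasc⟩
    exact ⟨⟨fun i => mem_powerset.1 hU (himg ▸ mem_image_of_mem w (mem_univ i)), hasc⟩, himg⟩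

lemma card_ascWordsOnto_le_of_card_eq {U V : Finset ℕ} (h : #U = #V) :
    #(ascWordsOnto n S U) ≤ #(ascWordsOnto n S V) := by
  obtain ⟨f, hf, hUV⟩ := exists_strictMonoOn_image_eq h
  refine card_le_card_of_injOn (f ∘ ·) (fun w hw => ?_) fun w₁ hw₁ w₂ hw₂ heq => ?_
  · rw [mem_coe, mem_ascWordsOnto] at hw ⊢
    have hwU : ∀ i, w i ∈ (U : Set ℕ) := fun i => hw.1 ▸ mem_image_of_mem w (mem_univ i)
    rw [ascSetS_comp_of_strictMonoOn hf hwU, ← image_image, hw.1, hUV]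
    exact ⟨rfl, hw.2⟩
  · rw [mem_coe, mem_ascWordsOnto] at hw₁ hw₂
    funext i
    exact hf.injOn (hw₁.1 ▸ mem_image_of_mem w₁ (mem_univ i))
      (hw₂.1 ▸ mem_image_of_mem w₂ (mem_univ i)) (congrFun heq i)

lemma card_ascWordsOnto_eq_of_card_eq {U V : Finset ℕ} (h : #U = #V) :
    #(ascWordsOnto n S U) = #(ascWordsOnto n S V) :=
  (card_ascWordsOnto_le_of_card_eq h).antisymm (card_ascWordsOnto_le_of_card_eq h.symm)

lemma card_ascWords_Icc (k : ℕ) :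
    #(ascWords n S (Icc 1 k)) =
      ∑ m ∈ range (k + 1), k.choose m * #(ascWordsOnto n S (Icc 1 m)) := by
  have hcard (m : ℕ) : #(Icc 1 m) = m := by simp
  rw [card_ascWords_eq_sum_powerset]
  calc ∑ U ∈ (Icc 1 k).powerset, #(ascWordsOnto n S U)
      = ∑ U ∈ (Icc 1 k).powerset, #(ascWordsOnto n S (Icc 1 #U)) :=
        sum_congr rfl fun U _ => card_ascWordsOnto_eq_of_card_eq (hcard _).symm
    _ = _ := by
        rw [sum_powerset_apply_card (fun m => #(ascWordsOnto n S (Icc 1 m))), hcard]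
        simp only [smul_eq_mul]

lemma isCayley_iff {w : Fin n → ℕ} : IsCayley w ↔ ∃ k ≤ n, univ.image w = Icc 1 k := by
  simp only [IsCayley, ← coe_inj, coe_image, coe_univ, Set.image_univ, coe_Icc]

lemma ncard_cayley_eq_sum :
    Set.ncard {w : Fin n → ℕ | IsCayley w ∧ ascSetS w ⊆ S} =
      ∑ k ∈ range (n + 1), #(ascWordsOnto n S (Icc 1 k)) := by
  have hset : {w : Fin n → ℕ | IsCayley w ∧ ascSetS w ⊆ S} =
      ↑((range (n + 1)).biUnion fun k => ascWordsOnto n S (Icc 1 k)) := by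
    ext w
    simp only [Set.mem_ofPred_eq, isCayley_iff, coe_biUnion, Set.mem_iUnion, mem_coe, mem_range,
      mem_ascWordsOnto, exists_prop, Nat.lt_succ_iff, ← exists_and_right, and_assoc]
  rw [hset, Set.ncard_coe_finset, card_biUnion]
  intro k _ k' _ hkk'
  refine disjoint_left.2 fun w hk hk' => hkk' ?_
  simp only [mem_ascWordsOnto] at hk hk'
  simpa using congrArg card (hk.1.symm.trans hk'.1)

lemma card_ascWordsOnto_Icc (k : ℕ) :
    (#(ascWordsOnto n S (Icc 1 k)) : ℤ) =
      ∑ i ∈ range (k + 1), (-1) ^ i * (k.choose i : ℤ) * #(ascWords n S (Icc 1 (k - i))) :=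
  (binomial_inversion (f := fun k => (#(ascWords n S (Icc 1 k)) : ℤ))
    (g := fun m => (#(ascWordsOnto n S (Icc 1 m)) : ℤ))
    (fun k => by exact_mod_cast card_ascWords_Icc k) k).symm

end Words

section Blocks

variable {n r : ℕ} {s : ℕ → ℕ}

lemma eq_of_mem_block (hs : StrictMonoOn s (Set.Iic (r + 1))) {j j' p : ℕ} (hj : j ≤ r)
    (hj' : j' ≤ r) (h : s j ≤ p ∧ p < s (j + 1)) (h' : s j' ≤ p ∧ p < s (j' + 1)) :
    j = j' := by
  have hle {a b : ℕ} (hb : b ≤ r) (hab : a < b) : s (a + 1) ≤ s b :=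
    hs.monotoneOn (by simp; omega) (by simp; omega) hab
  rcases lt_trichotomy j j' with hlt | rfl | hlt
  · have := hle hj' hlt; omega
  · rfl
  · have := hle hj hlt; omega

lemma notMem_of_mem_block_interior {S : Finset ℕ} (hS : S = (Icc 1 r).image s)
    (hs : StrictMonoOn s (Set.Iic (r + 1))) {j p : ℕ} (hj : j ≤ r) (h1 : s j < p)
    (h2 : p < s (j + 1)) : p ∉ S := by
  rw [hS, mem_image]
  rintro ⟨j', hj', rfl⟩
  rw [mem_Icc] at hj'
  obtain rfl := eq_of_mem_block hs hj hj'.2 ⟨h1.le, h2⟩ ⟨le_rfl, hs (by simp; omega)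
    (by simp; omega) (Nat.lt_add_one j')⟩
  exact lt_irrefl _ h1

def blockPos (s : ℕ → ℕ) (r : ℕ) (x : Σ j : Fin (r + 1), Fin (s (j + 1) - s j)) : ℕ :=
  s x.1 + x.2

lemma blockPos_mem_block (x : Σ j : Fin (r + 1), Fin (s (j + 1) - s j)) :
    s x.1 ≤ blockPos s r x ∧ blockPos s r x < s (x.1 + 1) := by
  have := x.2.isLt
  unfold blockPos
  omega

lemma blockPos_injective (hs : StrictMonoOn s (Set.Iic (r + 1))) :
    Function.Injective (blockPos s r) := by
  rintro ⟨j, i⟩ ⟨j', i'⟩ h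
  obtain rfl : j = j' := Fin.ext <| eq_of_mem_block hs (Nat.lt_succ_iff.1 j.isLt)
    (Nat.lt_succ_iff.1 j'.isLt) (blockPos_mem_block ⟨j, i⟩)
    (by rw [h]; exact blockPos_mem_block ⟨j', i'⟩)
  obtain rfl : i = i' := Fin.ext (by unfold blockPos at h; simpa using h)
  rfl

lemma card_blocks (hs0 : s 0 = 0) (hsn : s (r + 1) = n) (hs : StrictMonoOn s (Set.Iic (r + 1))) :
    Fintype.card (Σ j : Fin (r + 1), Fin (s (j + 1) - s j)) = n := by
  have htel : ∀ m ≤ r + 1, ∑ j ∈ range m, (s (j + 1) - s j) = s m := by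
    intro m hm
    induction m with
    | zero => simp [hs0]
    | succ m ih =>
      have := hs (by simp; omega) (by simp; omega) (Nat.lt_add_one m)
      rw [sum_range_succ, ih (by omega)]
      omega
  simp only [Fintype.card_sigma, Fintype.card_fin]
  rw [Fin.sum_univ_eq_sum_range (fun j => s (j + 1) - s j), htel _ le_rfl, hsn]

noncomputable def blockEquiv (hs0 : s 0 = 0) (hsn : s (r + 1) = n)
    (hs : StrictMonoOn s (Set.Iic (r + 1))) :
    (Σ j : Fin (r + 1), Fin (s (j + 1) - s j)) ≃ Fin n :=
  Equiv.ofBijective (fun x => ⟨blockPos s r x, hsn ▸ (blockPos_mem_block x).2.trans_le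
      (hs.monotoneOn (by simp; omega) (by simp) (by omega))⟩)
    ((Fintype.bijective_iff_injective_and_card _).2
      ⟨fun x y h => blockPos_injective hs (congrArg Fin.val h),
        (card_blocks hs0 hsn hs).trans (Fintype.card_fin n).symm⟩)

lemma blockEquiv_apply_val (hs0 : s 0 = 0) (hsn : s (r + 1) = n)
    (hs : StrictMonoOn s (Set.Iic (r + 1))) (x : Σ j : Fin (r + 1), Fin (s (j + 1) - s j)) :
    (blockEquiv hs0 hsn hs x : ℕ) = s x.1 + x.2 := rfl

lemma ascSetS_subset_iff_antitone_blocks {S : Finset ℕ} (hS : S = (Icc 1 r).image s)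
    (hs0 : s 0 = 0) (hsn : s (r + 1) = n) (hs : StrictMonoOn s (Set.Iic (r + 1)))
    (w : Fin n → ℕ) :
    ascSetS w ⊆ S ↔ ∀ j, Antitone fun i => w (blockEquiv hs0 hsn hs ⟨j, i⟩) := by
  rw [ascSetS_subset_iff]
  constructor
  · intro hasc j
    refine Fin.antitone_of_succ_le fun i hi => not_lt.1 fun hlt => ?_
    have hbound := (blockEquiv hs0 hsn hs ⟨j, ⟨i + 1, hi⟩⟩).isLt
    exact notMem_of_mem_block_interior hS hs (Nat.lt_succ_iff.1 j.isLt) (by omega) (by omega)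
      (hasc (s j + i) hbound hlt)
  · intro hanti p hp hlt
    obtain ⟨⟨j, i⟩, hji⟩ := (blockEquiv hs0 hsn hs).surjective ⟨p, by omega⟩
    have hpos : s j + i = p := congrArg Fin.val hji
    by_cases hi : (i : ℕ) + 1 < s (j + 1) - s j
    · have hnext : blockEquiv hs0 hsn hs ⟨j, ⟨i + 1, hi⟩⟩ = ⟨p + 1, hp⟩ :=
        Fin.ext (by rw [blockEquiv_apply_val]; dsimp only; omega)
      have hdesc : w (blockEquiv hs0 hsn hs ⟨j, ⟨i + 1, hi⟩⟩) ≤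
          w (blockEquiv hs0 hsn hs ⟨j, i⟩) :=
        hanti j (Fin.le_def.2 (Nat.le_succ _))
      rw [hji, hnext] at hdesc
      exact absurd hlt (not_lt.2 hdesc)
    · have hsj := hs (by simp) (by simp; omega) (Nat.lt_add_one (j : ℕ))
      have hp1 : p + 1 = s (j + 1) := by have := i.isLt; omega
      have hj : (j : ℕ) < r := by
        refine lt_of_le_of_ne (Nat.lt_succ_iff.1 j.isLt) fun hjr => ?_
        rw [hjr, hsn] at hp1
        exact hp.ne hp1
      exact hS ▸ mem_image.2 ⟨j + 1, mem_Icc.2 ⟨by omega, by omega⟩, hp1.symm⟩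

theorem card_ascWords_Icc_eq_prod {S : Finset ℕ} (hS : S = (Icc 1 r).image s) (hs0 : s 0 = 0)
    (hsn : s (r + 1) = n) (hs : StrictMonoOn s (Set.Iic (r + 1))) (k : ℕ) :
    #(ascWords n S (Icc 1 k)) = ∏ j : Fin (r + 1), #(antitoneWords (s (j + 1) - s j) k) := by
  rw [← Fintype.card_piFinset]
  refine card_equiv (((blockEquiv hs0 hsn hs).arrowCongr (Equiv.refl ℕ)).symm.trans
    (Equiv.piCurry fun _ _ => ℕ)) fun w => ?_
  simp only [ascWords, mem_filter, Fintype.mem_piFinset, mem_antitoneWords, forall_and,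
    ascSetS_subset_iff_antitone_blocks hS hs0 hsn hs]
  exact and_congr ((blockEquiv hs0 hsn hs).forall_congr_right.symm.trans Sigma.forall) Iff.rfl

end Blocks

theorem cayley_prescribed_strict_ascent_set_general (n r : ℕ) (s : ℕ → ℕ)
    (hs0 : s 0 = 0) (hsn : s (r + 1) = n)
    (hmono : ∀ j ≤ r, s j < s (j + 1)) (S : Finset ℕ)
    (hS : S = (Finset.Icc 1 r).image s) :
    (Set.ncard {w : Fin n → ℕ | IsCayley w ∧ ascSetS w ⊆ S} : ℤ) =
      ∑ k ∈ Finset.range (n + 1), ∑ i ∈ Finset.range (k + 1),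
        (-1 : ℤ) ^ i * k.choose i *
          ∏ j ∈ Finset.range (r + 1),
            ((k - i) + (s (j + 1) - s j) - 1).choose (s (j + 1) - s j) := by
  have hs : StrictMonoOn s (Set.Iic (r + 1)) :=
    strictMonoOn_Iic_of_lt_succ fun j hj => by simpa using hmono j (by omega)
  rw [ncard_cayley_eq_sum, Nat.cast_sum]
  refine sum_congr rfl fun k _ => ?_
  rw [card_ascWordsOnto_Icc]
  refine sum_congr rfl fun i _ => ?_
  rw [card_ascWords_Icc_eq_prod hS hs0 hsn hs, ← Fin.prod_univ_eq_prod_range]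
  simp [card_antitoneWords, Nat.multichoose_eq]

theorem cayley_prescribed_strict_ascent_set (n r : ℕ) (hn : 1 ≤ n) (s : ℕ → ℕ)
    (hs0 : s 0 = 0) (hsn : s (r + 1) = n)
    (hmono : ∀ j ≤ r, s j < s (j + 1)) (S : Finset ℕ)
    (hS : S = (Finset.Icc 1 r).image s) :
    (Set.ncard {w : Fin n → ℕ | IsCayley w ∧ ascSetS w ⊆ S} : ℤ) =
      ∑ k ∈ Finset.range (n + 1), ∑ i ∈ Finset.range (k + 1),
        (-1 : ℤ) ^ i * k.choose i *
          ∏ j ∈ Finset.range (r + 1),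
            ((k - i) + (s (j + 1) - s j) - 1).choose (s (j + 1) - s j) :=
  cayley_prescribed_strict_ascent_set_general n r s hs0 hsn hmono S hS
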